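/- There exists a constant C > 0 depending only on m and n such that for all δ > 0, all x ∈ ℝⁿ, and all f_j ∈ C_c^∞(ℝⁿ) (j = 1,…,m), ∫_{{(y₁,…,y_m) : Σ_{j=1}^m |x−y_j| ≤ δ}} (∏_{j=1}^m |f_j(y_j)|) / (Σ_{j=1}^m |x−y_j|)^{nm−1} dy₁…dy_m ≤ C δ M(f⃗)(x), where M(f⃗)(x) = sup_{Q∋x} ∏_{j=1}^m |Q|^{-1} ∫_Q |f_j(y_j)| dy_j is the multilinear Hardy–Littlewood maximal function (supremum over cubes Q containing x). -/

import Mathlib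

open MeasureTheory Metric Filter ENNReal

/-- The (closed) cube of center `c` and half side-length `r` in `ℝⁿ`. -/
def cube {n : ℕ} (c : EuclideanSpace ℝ (Fin n)) (r : ℝ) : Set (EuclideanSpace ℝ (Fin n)) :=
  {y | ∀ i, |y i - c i| ≤ r}

/-- The multilinear Hardy–Littlewood maximal function
`M(f⃗)(x) = sup_{Q ∋ x} ∏_j |Q|⁻¹ ∫_Q |f_j|`, supremum over cubes `Q` containing `x`. -/
noncomputable def multiMax {n m : ℕ} (f : Fin m → EuclideanSpace ℝ (Fin n) → ℝ)
    (x : EuclideanSpace ℝ (Fin n)) : ℝ≥0∞ :=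
  ⨆ (c : EuclideanSpace ℝ (Fin n)) (r : ℝ) (_ : 0 < r) (_ : x ∈ cube c r),
    ∏ j, (volume (cube c r))⁻¹ * ∫⁻ y in cube c r, ENNReal.ofReal |f j y|

section Aux

theorem my_lintegral_fin_prod {m : ℕ} {E : Fin m → Type*} [∀ i, MeasureSpace (E i)]
    [∀ i, SigmaFinite (volume : Measure (E i))] (g : ∀ i, E i → ℝ≥0∞)
    (hg : ∀ i, Measurable (g i)) :
    ∫⁻ y : ∀ i, E i, ∏ i, g i (y i) = ∏ i, ∫⁻ t, g i t := by
  induction m with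
  | zero => simp [MeasureTheory.volume_pi, Measure.pi_univ]
  | succ m ih =>
    have h := ((MeasureTheory.measurePreserving_piFinSuccAbove
      (fun i => (volume : Measure (E i))) 0).symm)
    rw [MeasureTheory.volume_pi, ← h.lintegral_comp_emb (MeasurableEquiv.measurableEmbedding _)]
    simp_rw [MeasurableEquiv.piFinSuccAbove_symm_apply, Fin.prod_univ_succ]
    have e1 : ∀ a : E 0 × ((j : Fin m) → E (Fin.succAbove 0 j)), (Fin.insertNthEquiv E 0) a 0 = a.1 :=
      fun a => Fin.insertNth_apply_same 0 a.1 a.2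
    have e2 : ∀ (a : E 0 × ((j : Fin m) → E (Fin.succAbove 0 j))) (i : Fin m),
        (Fin.insertNthEquiv E 0) a i.succ = a.2 i := fun a i => Fin.insertNth_apply_succAbove 0 a.1 a.2 i
    simp only [e1, e2]
    change ∫⁻ a : E 0 × ((j : Fin m) → E j.succ), g 0 a.1 * ∏ i, g i.succ (a.2 i)
      ∂(volume.prod (Measure.pi fun j => volume)) = _
    rw [lintegral_prod_mul (hg 0).aemeasurable
      (Measurable.aemeasurable (by fun_prop : Measurable
        (fun (x : ∀ j : Fin m, E (Fin.succ j)) => ∏ j, g (Fin.succ j) (x j))))]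
    rw [← MeasureTheory.volume_pi, ih (fun j => g (Fin.succ j)) (fun j => hg _)]

theorem my_lintegral_pi_prod {m : ℕ} {E : Fin m → Type*} [∀ i, MeasureSpace (E i)]
    [∀ i, SigmaFinite (volume : Measure (E i))] (g : ∀ i, E i → ℝ≥0∞)
    (hg : ∀ i, Measurable (g i)) (s : ∀ i, Set (E i)) (hs : ∀ i, MeasurableSet (s i)) :
    ∫⁻ y in Set.univ.pi s, ∏ i, g i (y i) = ∏ i, ∫⁻ t in s i, g i t := by
  have hT : MeasurableSet (Set.univ.pi s) := MeasurableSet.univ_pi hs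
  rw [← lintegral_indicator hT]
  have key : (Set.univ.pi s).indicator (fun y => ∏ i, g i (y i))
      = fun y => ∏ i, (s i).indicator (g i) (y i) := by
    funext y
    by_cases hy : y ∈ Set.univ.pi s
    · rw [Set.indicator_of_mem hy]
      exact Finset.prod_congr rfl fun i _ =>
        (Set.indicator_of_mem (hy i (Set.mem_univ i)) _).symm
    · rw [Set.indicator_of_notMem hy]
      obtain ⟨i, hi⟩ : ∃ i, y i ∉ s i := by simpa [Set.mem_pi] using hy
      exact (Finset.prod_eq_zero (Finset.mem_univ i)
        (Set.indicator_of_notMem hi _)).symm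
  rw [key, my_lintegral_fin_prod (fun i => (s i).indicator (g i))
    (fun i => (hg i).indicator (hs i))]
  exact Finset.prod_congr rfl fun i _ => lintegral_indicator (hs i) _

theorem coord_le_dist {n : ℕ} (a b : EuclideanSpace ℝ (Fin n)) (i : Fin n) :
    |a i - b i| ≤ dist a b := by
  rw [EuclideanSpace.dist_eq]
  have h2 : dist (a i) (b i) ^ 2 ≤ ∑ j, dist (a j) (b j) ^ 2 :=
    Finset.single_le_sum (f := fun j => dist (a j) (b j) ^ 2)
      (fun j _ => sq_nonneg _) (Finset.mem_univ i)
  calc |a i - b i| = Real.sqrt (dist (a i) (b i) ^ 2) := by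
        rw [Real.dist_eq, sq_abs, Real.sqrt_sq_eq_abs]
    _ ≤ _ := Real.sqrt_le_sqrt h2

theorem cube_eq_preimage {n : ℕ} (c : EuclideanSpace ℝ (Fin n)) (r : ℝ) :
    cube c r = (MeasurableEquiv.toLp 2 (Fin n → ℝ)).symm ⁻¹'
      (Set.univ.pi fun i => Set.Icc (c i - r) (c i + r)) := by
  ext y
  simp only [cube, Set.mem_setOf_eq, Set.mem_preimage, Set.mem_pi, Set.mem_univ, forall_true_left,
    Set.mem_Icc, true_implies, MeasurableEquiv.coe_toLp_symm]
  constructor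
  · intro h i
    have := abs_le.mp (h i)
    exact ⟨by linarith [this.1], by linarith [this.2]⟩
  · intro h i
    have := h i
    rw [abs_le]
    exact ⟨by linarith [this.1], by linarith [this.2]⟩

theorem measurableSet_cube {n : ℕ} (c : EuclideanSpace ℝ (Fin n)) (r : ℝ) :
    MeasurableSet (cube c r) := by
  rw [cube_eq_preimage]
  exact (MeasurableEquiv.toLp 2 (Fin n → ℝ)).symm.measurable
    (MeasurableSet.univ_pi fun i => measurableSet_Icc)

theorem volume_cube {n : ℕ} (c : EuclideanSpace ℝ (Fin n)) (r : ℝ) :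
    volume (cube c r) = ENNReal.ofReal (2 * r) ^ n := by
  rw [cube_eq_preimage]
  rw [(EuclideanSpace.volume_preserving_symm_measurableEquiv_toLp (Fin n)).measure_preimage
    ((MeasurableSet.univ_pi fun i => measurableSet_Icc).nullMeasurableSet)]
  rw [volume_pi_pi]
  simp only [Real.volume_Icc]
  have hb : ∀ x : Fin n, ENNReal.ofReal (c x + r - (c x - r)) = ENNReal.ofReal (2 * r) := by
    intro x; congr 1; ring
  rw [Finset.prod_congr rfl (fun x _ => hb x), Finset.prod_const, Finset.card_univ,
    Fintype.card_fin]

theorem le_multiMax {n m : ℕ} (f : Fin m → EuclideanSpace ℝ (Fin n) → ℝ)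
    (x c : EuclideanSpace ℝ (Fin n)) {r : ℝ} (hr : 0 < r) (hx : x ∈ cube c r) :
    (∏ j, (volume (cube c r))⁻¹ * ∫⁻ y in cube c r, ENNReal.ofReal |f j y|) ≤ multiMax f x :=
  le_iSup_of_le c (le_iSup_of_le r (le_iSup_of_le hr (le_iSup_of_le hx le_rfl)))

end Aux

/-- Near-diagonal estimate: there is `C = C(m,n) > 0` such that for all `δ > 0`, all `x`,
and all `f_j ∈ C_c^∞(ℝⁿ)`,
`∫_{Σ_j |x−y_j| ≤ δ} (∏_j |f_j(y_j)|) (Σ_j |x−y_j|)^{-(nm−1)} dy⃗ ≤ C δ M(f⃗)(x)`. -/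
theorem stmt_9 (n m : ℕ) (hn : 0 < n) (hm : 0 < m) :
    ∃ C : ℝ, 0 < C ∧ ∀ (δ : ℝ), 0 < δ → ∀ (x : EuclideanSpace ℝ (Fin n))
      (f : Fin m → EuclideanSpace ℝ (Fin n) → ℝ),
      (∀ j, ContDiff ℝ (⊤ : ℕ∞) (f j) ∧ HasCompactSupport (f j)) →
      (∫⁻ y in {y : Fin m → EuclideanSpace ℝ (Fin n) | ∑ j, dist x (y j) ≤ δ},
          (∏ j, ENNReal.ofReal |f j (y j)|) /
            (ENNReal.ofReal (∑ j, dist x (y j))) ^ ((n * m : ℝ) - 1))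
        ≤ ENNReal.ofReal (C * δ) * multiMax f x := by
  classical
  refine ⟨(4 : ℝ) ^ (n * m), by positivity, ?_⟩
  intro δ hδ x f hf
  -- notation
  set S : (Fin m → EuclideanSpace ℝ (Fin n)) → ℝ := fun y => ∑ j, dist x (y j) with hS_def
  set e : ℝ := (n * m : ℝ) - 1 with he_def
  have hnm1 : (1 : ℕ) ≤ n * m := Nat.one_le_iff_ne_zero.mpr (Nat.mul_ne_zero hn.ne' hm.ne')
  have he0 : 0 ≤ e := by
    have h1 : (1 : ℝ) ≤ ((n * m : ℕ) : ℝ) := by exact_mod_cast hnm1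
    rw [he_def]; push_cast at h1 ⊢; linarith
  have hS_cont : Continuous S := by
    apply continuous_finset_sum
    intro j _
    exact Continuous.dist continuous_const (continuous_apply j)
  have hS_meas : Measurable S := hS_cont.measurable
  set P : (Fin m → EuclideanSpace ℝ (Fin n)) → ℝ≥0∞ := fun y => ∏ j, ENNReal.ofReal |f j (y j)| with hP_def
  have hP_meas : Measurable P := by
    apply Finset.measurable_prod
    intro j _
    have hc : Continuous fun y : Fin m → EuclideanSpace ℝ (Fin n) => f j (y j) :=
      (hf j).1.continuous.comp (continuous_apply j)
    exact hc.abs.measurable.ennreal_ofReal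
  set A : ℕ → Set (Fin m → EuclideanSpace ℝ (Fin n)) :=
    fun k => {y | δ * (2⁻¹ : ℝ) ^ (k + 1) < S y ∧ S y ≤ δ * (2⁻¹ : ℝ) ^ k} with hA_def
  have hA_meas : ∀ k, MeasurableSet (A k) := fun k =>
    (measurableSet_lt measurable_const hS_meas).inter
      (measurableSet_le hS_meas measurable_const)
  have hS_nonneg : ∀ y, 0 ≤ S y := fun y => Finset.sum_nonneg fun j _ => dist_nonneg
  -- the splitting
  have hsub : {y : Fin m → EuclideanSpace ℝ (Fin n) | S y ≤ δ} ⊆ {fun _ => x} ∪ ⋃ k, A k := by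
    intro y hy
    rcases (hS_nonneg y).eq_or_lt with h0 | ht
    · left
      have hall : ∀ j ∈ Finset.univ, dist x (y j) = 0 :=
        (Finset.sum_eq_zero_iff_of_nonneg fun j _ => dist_nonneg).mp h0.symm
      have : y = fun _ => x := by
        funext j
        exact (dist_eq_zero.mp (hall j (Finset.mem_univ j))).symm
      simp [this]
    · right
      have hex : ∃ k, δ * (2⁻¹ : ℝ) ^ k < S y := by
        obtain ⟨k, hk⟩ := exists_pow_lt_of_lt_one (div_pos ht hδ) (by norm_num : (2⁻¹ : ℝ) < 1)
        refine ⟨k, ?_⟩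
        rw [lt_div_iff₀ hδ] at hk
        linarith [hk]
      have hK : δ * (2⁻¹ : ℝ) ^ (Nat.find hex) < S y := Nat.find_spec hex
      have hK0 : Nat.find hex ≠ 0 := by
        intro h0
        rw [h0] at hK
        simp only [pow_zero, mul_one] at hK
        exact absurd hy (not_le.mpr hK)
      obtain ⟨k, hk⟩ := Nat.exists_eq_succ_of_ne_zero hK0
      refine Set.mem_iUnion.mpr ⟨k, ?_, ?_⟩
      · rw [← Nat.succ_eq_add_one, ← hk]; exact hK
      · have := Nat.find_min hex (by omega : k < Nat.find hex)
        exact not_lt.mp this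
  -- measure of the singleton is zero
  haveI : Nontrivial (EuclideanSpace ℝ (Fin n)) := by
    set i0 : Fin n := ⟨0, hn⟩ with hi0
    refine nontrivial_of_ne (EuclideanSpace.single i0 (1 : ℝ)) 0 ?_
    intro h
    have h1 : (EuclideanSpace.single i0 (1 : ℝ)) i0
        = (0 : EuclideanSpace ℝ (Fin n)) i0 := by rw [h]
    have h2 : (0 : EuclideanSpace ℝ (Fin n)) i0 = 0 := rfl
    rw [h2, EuclideanSpace.single_apply] at h1
    simp at h1
  have hsing : volume ({fun _ => x} : Set (Fin m → EuclideanSpace ℝ (Fin n))) = 0 := by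
    have hsub2 : ({fun _ => x} : Set (Fin m → EuclideanSpace ℝ (Fin n))) ⊆
        Set.univ.pi fun _ : Fin m => ({x} : Set (EuclideanSpace ℝ (Fin n))) := by
      intro y hy
      rw [Set.mem_singleton_iff] at hy
      subst hy
      intro j _
      rfl
    refine le_antisymm ?_ zero_le
    refine (measure_mono hsub2).trans_eq ?_
    rw [volume_pi_pi]
    have hx0 : volume ({x} : Set (EuclideanSpace ℝ (Fin n))) = 0 := measure_singleton x
    rw [Finset.prod_congr rfl fun j _ => hx0, Finset.prod_const, Finset.card_univ,
      Fintype.card_fin, zero_pow hm.ne']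
  -- the per-annulus estimate
  have hstep : ∀ k : ℕ,
      (∫⁻ y in A k, P y / (ENNReal.ofReal (S y)) ^ e)
        ≤ ENNReal.ofReal ((4 : ℝ) ^ (n * m) * (δ * (2⁻¹ : ℝ) ^ (k + 1))) * multiMax f x := by
    intro k
    set c : ℝ := δ * (2⁻¹ : ℝ) ^ (k + 1) with hc_def
    set r : ℝ := δ * (2⁻¹ : ℝ) ^ k with hr_def
    have hc : 0 < c := by positivity
    have hr : 0 < r := by positivity
    have hcr : 2 * r = 4 * c := by rw [hc_def, hr_def, pow_succ]; ring
    have hDk : ∀ y ∈ A k, P y / (ENNReal.ofReal (S y)) ^ e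
        ≤ (ENNReal.ofReal c ^ e)⁻¹ * P y := by
      intro y hy
      have hle : ENNReal.ofReal c ^ e ≤ (ENNReal.ofReal (S y)) ^ e :=
        ENNReal.rpow_le_rpow (ENNReal.ofReal_le_ofReal hy.1.le) he0
      calc P y / (ENNReal.ofReal (S y)) ^ e ≤ P y / ENNReal.ofReal c ^ e :=
            ENNReal.div_le_div_left hle _
        _ = (ENNReal.ofReal c ^ e)⁻¹ * P y := by
            rw [ENNReal.div_eq_inv_mul]
    have hconst_ne_top : (ENNReal.ofReal c ^ e)⁻¹ ≠ ∞ := by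
      refine ENNReal.inv_ne_top.mpr ?_
      exact (ENNReal.rpow_pos (ENNReal.ofReal_pos.mpr hc) ENNReal.ofReal_ne_top).ne'
    have h1 : (∫⁻ y in A k, P y / (ENNReal.ofReal (S y)) ^ e)
        ≤ (ENNReal.ofReal c ^ e)⁻¹ * ∫⁻ y in A k, P y := by
      refine le_trans (setLIntegral_mono' (hA_meas k) hDk) ?_
      rw [lintegral_const_mul' _ _ hconst_ne_top]
    -- the annulus is inside the cube power
    have hsub3 : A k ⊆ Set.univ.pi fun _ : Fin m => cube x r := by
      intro y hy j _
      intro i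
      have h1 : |y j i - x i| ≤ dist (y j) x := coord_le_dist (y j) x i
      have h2 : dist x (y j) ≤ S y :=
        Finset.single_le_sum (f := fun j => dist x (y j))
          (fun j _ => dist_nonneg) (Finset.mem_univ j)
      rw [dist_comm] at h1
      calc |y j i - x i| ≤ dist x (y j) := h1
        _ ≤ S y := h2
        _ ≤ r := hy.2
    have h2 : (∫⁻ y in A k, P y)
        ≤ ∏ j, ∫⁻ t in cube x r, ENNReal.ofReal |f j t| := by
      refine le_trans (lintegral_mono_set hsub3) ?_
      rw [my_lintegral_pi_prod (fun j t => ENNReal.ofReal |f j t|)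
        (fun j => ((hf j).1.continuous.abs.measurable).ennreal_ofReal)
        (fun _ => cube x r) (fun _ => measurableSet_cube x r)]
    -- insert the maximal function
    set V : ℝ≥0∞ := volume (cube x r) with hV_def
    have hV : V = ENNReal.ofReal (2 * r) ^ n := volume_cube x r
    have hV0 : V ≠ 0 := by
      rw [hV]
      exact (pow_ne_zero n (ENNReal.ofReal_pos.mpr (by linarith)).ne')
    have hVtop : V ≠ ∞ := by
      rw [hV]
      exact ENNReal.pow_ne_top ENNReal.ofReal_ne_top
    have hxcube : x ∈ cube x r := by
      intro i
      simp only [sub_self, abs_zero]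
      exact hr.le
    have h3 : (∏ j, ∫⁻ t in cube x r, ENNReal.ofReal |f j t|)
        ≤ V ^ m * multiMax f x := by
      have heq : (∏ j : Fin m, ∫⁻ t in cube x r, ENNReal.ofReal |f j t|)
          = V ^ m * ∏ j : Fin m, V⁻¹ * ∫⁻ t in cube x r, ENNReal.ofReal |f j t| := by
        rw [Finset.prod_mul_distrib, Finset.prod_const, Finset.card_univ, Fintype.card_fin,
          ← mul_assoc, ← mul_pow, ENNReal.mul_inv_cancel hV0 hVtop, one_pow, one_mul]
      rw [heq]
      exact mul_le_mul_right (le_multiMax f x x hr hxcube) _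
    -- the key arithmetic identity
    have hkey : (ENNReal.ofReal c ^ e)⁻¹ * V ^ m
        = ENNReal.ofReal ((4 : ℝ) ^ (n * m) * c) := by
      have hVm : V ^ m = ENNReal.ofReal ((4 * c) ^ (n * m)) := by
        rw [hV, ← pow_mul, hcr, ← ENNReal.ofReal_pow (by linarith)]
      have hreal : (4 * c) ^ (n * m) = c ^ e * ((4 : ℝ) ^ (n * m) * c) := by
        have h4 : (c : ℝ) ^ (n * m) = c ^ (e + 1) := by
          rw [← Real.rpow_natCast c (n * m)]
          congr 1
          rw [he_def]
          push_cast
          ring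
        rw [mul_pow, h4, Real.rpow_add hc, Real.rpow_one]
        ring
      rw [hVm, hreal, ENNReal.ofReal_mul (Real.rpow_nonneg hc.le _),
        ← ENNReal.ofReal_rpow_of_pos hc, ← mul_assoc,
        ENNReal.inv_mul_cancel
          (ENNReal.rpow_pos (ENNReal.ofReal_pos.mpr hc) ENNReal.ofReal_ne_top).ne'
          (by
            refine ENNReal.rpow_ne_top_of_nonneg he0 ENNReal.ofReal_ne_top),
        one_mul]
    calc (∫⁻ y in A k, P y / (ENNReal.ofReal (S y)) ^ e)
        ≤ (ENNReal.ofReal c ^ e)⁻¹ * ∫⁻ y in A k, P y := h1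
      _ ≤ (ENNReal.ofReal c ^ e)⁻¹ * (V ^ m * multiMax f x) := by
          exact mul_le_mul_right (le_trans h2 h3) _
      _ = ((ENNReal.ofReal c ^ e)⁻¹ * V ^ m) * multiMax f x := by ring
      _ = ENNReal.ofReal ((4 : ℝ) ^ (n * m) * c) * multiMax f x := by rw [hkey]
  -- summing the geometric series
  have hsum : (∑' k : ℕ, ENNReal.ofReal ((4 : ℝ) ^ (n * m) * (δ * (2⁻¹ : ℝ) ^ (k + 1))))
      = ENNReal.ofReal ((4 : ℝ) ^ (n * m) * δ) := by
    have hterm : ∀ k : ℕ, ENNReal.ofReal ((4 : ℝ) ^ (n * m) * (δ * (2⁻¹ : ℝ) ^ (k + 1)))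
        = ENNReal.ofReal ((4 : ℝ) ^ (n * m) * δ * 2⁻¹) * ((2 : ℝ≥0∞)⁻¹) ^ k := by
      intro k
      rw [show (4 : ℝ) ^ (n * m) * (δ * (2⁻¹ : ℝ) ^ (k + 1))
          = ((4 : ℝ) ^ (n * m) * δ * 2⁻¹) * ((2⁻¹ : ℝ)) ^ k by rw [pow_succ]; ring]
      rw [ENNReal.ofReal_mul (by positivity), ENNReal.ofReal_pow (by norm_num)]
      congr 2
      rw [ENNReal.ofReal_inv_of_pos (by norm_num)]
      norm_num
    rw [tsum_congr hterm, ENNReal.tsum_mul_left, ENNReal.tsum_geometric,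
      ENNReal.one_sub_inv_two, inv_inv]
    rw [show (2 : ℝ≥0∞) = ENNReal.ofReal 2 by norm_num]
    rw [← ENNReal.ofReal_mul (by positivity)]
    congr 1
    ring
  -- put everything together
  show (∫⁻ y in {y : Fin m → EuclideanSpace ℝ (Fin n) | S y ≤ δ},
      P y / (ENNReal.ofReal (S y)) ^ e)
    ≤ ENNReal.ofReal ((4 : ℝ) ^ (n * m) * δ) * multiMax f x
  calc (∫⁻ y in {y : Fin m → EuclideanSpace ℝ (Fin n) | S y ≤ δ}, P y / (ENNReal.ofReal (S y)) ^ e)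
      ≤ ∫⁻ y in ({fun _ => x} ∪ ⋃ k, A k), P y / (ENNReal.ofReal (S y)) ^ e :=
        lintegral_mono_set hsub
    _ ≤ (∫⁻ y in ({fun _ => x} : Set (Fin m → EuclideanSpace ℝ (Fin n))), P y / (ENNReal.ofReal (S y)) ^ e)
        + ∫⁻ y in (⋃ k, A k), P y / (ENNReal.ofReal (S y)) ^ e := lintegral_union_le _ _ _
    _ = ∫⁻ y in (⋃ k, A k), P y / (ENNReal.ofReal (S y)) ^ e := by
        rw [setLIntegral_measure_zero _ _ hsing, zero_add]
    _ ≤ ∑' k : ℕ, ∫⁻ y in A k, P y / (ENNReal.ofReal (S y)) ^ e := lintegral_iUnion_le _ _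
    _ ≤ ∑' k : ℕ, ENNReal.ofReal ((4 : ℝ) ^ (n * m) * (δ * (2⁻¹ : ℝ) ^ (k + 1)))
        * multiMax f x := ENNReal.tsum_le_tsum hstep
    _ = (∑' k : ℕ, ENNReal.ofReal ((4 : ℝ) ^ (n * m) * (δ * (2⁻¹ : ℝ) ^ (k + 1))))
        * multiMax f x := ENNReal.tsum_mul_right
    _ = ENNReal.ofReal ((4 : ℝ) ^ (n * m) * δ) * multiMax f x := by rw [hsum]
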